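/- arXiv:1811.10157 — 3 statements merged into one kernel-verified Lean document; each statement's English description precedes it below -/
import Mathlib

section
/- Let d ≥ 2 and let δ be a directed automaton automorphism of T_d with spine spine(δ) = b_1 b_2 b_3 ⋯ ∈ Σ^ω. Then the spine is eventually periodic: there exist a finite word ι = ι_1 ι_2 ⋯ ι_s ∈ Σ* (the initial section) and a nonempty finite word π = π_1 π_2 ⋯ π_t ∈ Σ* (the periodic section) such that spine(δ) = ι π^ω, and moreover δ|_{ι π^k π_1 π_2 ⋯ π_j} = δ|_{ι π_1 π_2 ⋯ π_j} for all k, j ∈ ℕ with 0 ≤ j < t. -/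
/-!
An automaton automorphism has only finitely many restrictions `δ|_u` (one per state), so two
prefixes `b₁⋯bₘ` and `b₁⋯bₘ₊ₜ` of the spine carry the same restriction. Along a spine the
restriction at `b₁⋯bₙ` determines the next letter `bₙ₊₁` (the unique direction with non-finitary
restriction), hence also the restriction at `b₁⋯bₙ₊₁`. So from position `m` on, both the letters
and the restrictions repeat with period `t`.
-/

/-- `f` is an automorphism of the `d`-regular rooted tree with vertex set `List (Fin d)`. -/
def IsTreeAut (d : ℕ) (f : List (Fin d) → List (Fin d)) : Prop :=
  Function.Bijective f ∧ f [] = [] ∧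
    ∀ (u : List (Fin d)) (a : Fin d), ∃ b : Fin d, f (u ++ [a]) = f u ++ [b]

/-- The restriction `f|_u` of a tree automorphism `f` to the subtree rooted at `u`. -/
def restrictAut (d : ℕ) (f : List (Fin d) → List (Fin d)) (u : List (Fin d)) :
    List (Fin d) → List (Fin d) :=
  fun w => (f (u ++ w)).drop u.length

/-- The map on words induced by a `Σ`-automaton with permutations `σq`,
transition function `t`, started at state `q`. -/
def autMap {d : ℕ} {Q : Type} (σq : Q → Equiv.Perm (Fin d)) (t : Q → Fin d → Q) :
    Q → List (Fin d) → List (Fin d)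
  | _, [] => []
  | q, a :: w => σq q a :: autMap σq t (t q a) w

/-- `f` is induced by a finite `Σ`-automaton from some initial state. -/
def IsAutomatonAut (d : ℕ) (f : List (Fin d) → List (Fin d)) : Prop :=
  ∃ (Q : Type) (_ : Fintype Q) (σq : Q → Equiv.Perm (Fin d)) (t : Q → Fin d → Q) (v : Q),
    f = autMap σq t v

/-- `f` is finitary: all restrictions at some level `k` are trivial. -/
def IsFinitaryFun (d : ℕ) (f : List (Fin d) → List (Fin d)) : Prop :=
  ∃ k : ℕ, ∀ u : List (Fin d), u.length = k → restrictAut d f u = id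

/-- `f` is bounded: at every level, at most `N` vertices have nontrivial restriction. -/
def IsBoundedFun (d : ℕ) (f : List (Fin d) → List (Fin d)) : Prop :=
  ∃ N : ℕ, ∀ k : ℕ,
    Set.ncard {v : List (Fin d) | v.length = k ∧ restrictAut d f v ≠ id} ≤ N

/-- The length-`n` prefix of the infinite word `b`. -/
def spinePrefix {d : ℕ} (b : ℕ → Fin d) (n : ℕ) : List (Fin d) :=
  (List.range n).map b

/-- `b` is a spine for `f`: restrictions along `b` are never finitary, while any
single-letter deviation from `b` yields a finitary restriction. -/
def IsSpine (d : ℕ) (f : List (Fin d) → List (Fin d)) (b : ℕ → Fin d) : Prop :=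
  (∀ n : ℕ, ¬ IsFinitaryFun d (restrictAut d f (spinePrefix b n))) ∧
  (∀ (n : ℕ) (a : Fin d), a ≠ b n →
    IsFinitaryFun d (restrictAut d f (spinePrefix b n ++ [a])))

/-- `f` is a directed automaton automorphism. -/
def IsDirectedAut (d : ℕ) (f : List (Fin d) → List (Fin d)) : Prop :=
  IsAutomatonAut d f ∧ ¬ IsFinitaryFun d f ∧ ∃ b : ℕ → Fin d, IsSpine d f b

/-- `k`-fold concatenation of the word `l`. -/
def repList {α : Type} (l : List α) (k : ℕ) : List α :=
  (List.replicate k l).flatten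

def readState {d : ℕ} {Q : Type} (t : Q → Fin d → Q) : Q → List (Fin d) → Q
  | q, [] => q
  | q, a :: w => readState t (t q a) w

section Automaton

variable {d : ℕ} {Q : Type} (σq : Q → Equiv.Perm (Fin d)) (t : Q → Fin d → Q)

lemma length_autMap (q : Q) (u : List (Fin d)) : (autMap σq t q u).length = u.length := by
  induction u generalizing q with
  | nil => rfl
  | cons a u ih => simp [autMap, ih]

lemma autMap_append (q : Q) (u w : List (Fin d)) :
    autMap σq t q (u ++ w) = autMap σq t q u ++ autMap σq t (readState t q u) w := by
  induction u generalizing q with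
  | nil => rfl
  | cons a u ih => simp [autMap, readState, ih]

lemma restrictAut_autMap (q : Q) (u : List (Fin d)) :
    restrictAut d (autMap σq t q) u = autMap σq t (readState t q u) := by
  funext w
  simp only [restrictAut, autMap_append]
  exact List.drop_left' (length_autMap σq t q u)

end Automaton

lemma IsAutomatonAut.finite_range_restrictAut {d : ℕ} {f : List (Fin d) → List (Fin d)}
    (hf : IsAutomatonAut d f) : (Set.range (restrictAut d f)).Finite := by
  obtain ⟨Q, _, σq, t, v, rfl⟩ := hf
  refine (Set.finite_range (autMap σq t)).subset ?_
  rintro _ ⟨u, rfl⟩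
  exact ⟨_, (restrictAut_autMap σq t v u).symm⟩

lemma restrictAut_append (d : ℕ) (f : List (Fin d) → List (Fin d)) (u v : List (Fin d)) :
    restrictAut d f (u ++ v) = restrictAut d (restrictAut d f u) v := by
  funext w
  simp [restrictAut, List.append_assoc, List.drop_drop]

section SpinePrefix

variable {d : ℕ} (b : ℕ → Fin d)

@[simp]
lemma length_spinePrefix (n : ℕ) : (spinePrefix b n).length = n := by
  simp [spinePrefix]

lemma spinePrefix_succ (n : ℕ) : spinePrefix b (n + 1) = spinePrefix b n ++ [b n] := by
  simp [spinePrefix, List.range_succ]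

lemma spinePrefix_add (p q : ℕ) :
    spinePrefix b (p + q) = spinePrefix b p ++ spinePrefix (fun i => b (p + i)) q := by
  simp [spinePrefix, List.range_add, Function.comp_def]

lemma take_spinePrefix {j n : ℕ} (h : j ≤ n) : (spinePrefix b n).take j = spinePrefix b j := by
  rw [spinePrefix, ← List.map_take, List.take_range, Nat.min_eq_left h, spinePrefix]

lemma Function.Periodic.spinePrefix_mul_add {b : ℕ → Fin d} {t : ℕ} (hb : Function.Periodic b t)
    (k j : ℕ) :
    spinePrefix b (k * t + j) = repList (spinePrefix b t) k ++ spinePrefix b j := by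
  have shift (k : ℕ) : (fun i => b (k * t + i)) = b :=
    funext fun i => by rw [add_comm]; exact hb.nat_mul k i
  rw [spinePrefix_add, shift]
  congr 1
  induction k with
  | zero => simp [spinePrefix, repList]
  | succ k ih =>
    rw [add_mul, one_mul, spinePrefix_add, ih, shift]
    simp [repList, List.replicate_succ']

end SpinePrefix

section Spine

variable {d : ℕ} {f : List (Fin d) → List (Fin d)} {b : ℕ → Fin d}

lemma IsSpine.apply_eq_of_restrictAut_eq (hb : IsSpine d f b) {p q : ℕ}
    (h : restrictAut d f (spinePrefix b p) = restrictAut d f (spinePrefix b q)) : b p = b q := by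
  by_contra hne
  apply hb.1 (p + 1)
  rw [spinePrefix_succ, restrictAut_append, h, ← restrictAut_append]
  exact hb.2 q (b p) hne

lemma IsSpine.restrictAut_add_eq (hb : IsSpine d f b) {p q : ℕ}
    (h : restrictAut d f (spinePrefix b p) = restrictAut d f (spinePrefix b q)) (i : ℕ) :
    restrictAut d f (spinePrefix b (p + i)) = restrictAut d f (spinePrefix b (q + i)) := by
  induction i with
  | zero => exact h
  | succ i ih =>
    rw [← add_assoc, ← add_assoc, spinePrefix_succ, spinePrefix_succ, restrictAut_append,
      restrictAut_append, ih, hb.apply_eq_of_restrictAut_eq ih]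

end Spine

theorem spine_eventually_periodic_general (d : ℕ)
    (δ : List (Fin d) → List (Fin d))
    (hA : IsAutomatonAut d δ)
    (b : ℕ → Fin d) (hb : IsSpine d δ b) :
    ∃ ι π : List (Fin d), π ≠ [] ∧
      (∀ k : ℕ, spinePrefix b (ι.length + k * π.length) = ι ++ repList π k) ∧
      (∀ (k j : ℕ), j < π.length →
        restrictAut d δ (ι ++ repList π k ++ π.take j) =
          restrictAut d δ (ι ++ π.take j)) := by
  set r := fun n => restrictAut d δ (spinePrefix b n) with hr_def
  obtain ⟨m, n, hmn, hrmn⟩ := hA.finite_range_restrictAut.exists_lt_map_eq_of_forall_mem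
    (f := r) fun n => Set.mem_range_self (spinePrefix b n)
  obtain ⟨t, rfl⟩ := Nat.exists_eq_add_of_lt hmn
  have hr_per : Function.Periodic (fun i => r (m + i)) (t + 1) := fun i => by
    simp only [hr_def, add_comm i, ← add_assoc]
    exact (hb.restrictAut_add_eq hrmn i).symm
  have hb_per : Function.Periodic (fun i => b (m + i)) (t + 1) := fun i =>
    hb.apply_eq_of_restrictAut_eq (hr_per i)
  refine ⟨spinePrefix b m, spinePrefix (fun i => b (m + i)) (t + 1),
    List.ne_nil_of_length_pos (by simp), fun k => ?_, fun k j hj => ?_⟩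
  · simpa [spinePrefix] using
      (spinePrefix_add b m _).trans (congrArg _ (hb_per.spinePrefix_mul_add k 0))
  · simp only [length_spinePrefix] at hj
    rw [take_spinePrefix _ hj.le, List.append_assoc, ← hb_per.spinePrefix_mul_add,
      ← spinePrefix_add, ← spinePrefix_add, add_comm (k * _)]
    exact (hr_per.nat_mul k) j

/-- The spine of a directed automaton automorphism is eventually periodic, and
restrictions along the spine are stable under removing copies of the periodic section. -/
theorem spine_eventually_periodic (d : ℕ) (hd : 2 ≤ d)
    (δ : List (Fin d) → List (Fin d)) (hδ : IsTreeAut d δ)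
    (hA : IsAutomatonAut d δ) (hnf : ¬ IsFinitaryFun d δ)
    (b : ℕ → Fin d) (hb : IsSpine d δ b) :
    ∃ ι π : List (Fin d), π ≠ [] ∧
      (∀ k : ℕ, spinePrefix b (ι.length + k * π.length) = ι ++ repList π k) ∧
      (∀ (k j : ℕ), j < π.length →
        restrictAut d δ (ι ++ repList π k ++ π.take j) =
          restrictAut d δ (ι ++ π.take j)) :=
  spine_eventually_periodic_general d δ hA b hb
end

section
/- For every ET0L grammar G = (Σ, V, T, R, S) there exists a check-stack pushdown (cspd) automaton M with input alphabet Σ such that L(M) = L(G). -/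
/-!
The automaton guesses a control word `ts ∈ R` and takes `ts.map some ++ [none]` as its
check-stack. Its pushdown holds the not yet expanded suffixes of the right-hand sides introduced
so far, the newest on top, and it walks the derivation tree depth first: a terminal on top is
matched against the input, and a non-terminal is replaced by a right-hand side of the table named
by the check-stack letter at the current height. Since that letter depends only on the height,
which is the depth in the derivation tree, all occurrences at one depth are rewritten by the same
table, which is exactly a parallel step of `G`; the final `none` lets the cells at depth
`ts.length`, which are fully derived, be read off. Conversely, the condition that the remaining
input is derived from the pushdown contents propagates backwards along an accepting run.
-/

/-- `L` is a regular language: it is accepted by some DFA with finitely many states. -/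
def IsRegularLang {T : Type} (L : Language T) : Prop :=
  ∃ (Q : Type) (_ : Fintype Q) (M : DFA T Q), M.accepts = L

/-- One application of a table `ρ` (assigning to each non-terminal a set of allowed
replacement words): every occurrence of every non-terminal is replaced, independently,
by some word allowed by `ρ`; terminals are left unchanged. -/
inductive TableStep {σ V : Type} (ρ : V → Set (List (σ ⊕ V))) :
    List (σ ⊕ V) → List (σ ⊕ V) → Prop
  | nil : TableStep ρ [] []
  | term (a : σ) {u u' : List (σ ⊕ V)} :
      TableStep ρ u u' → TableStep ρ (Sum.inl a :: u) (Sum.inl a :: u')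
  | nonterm (X : V) {w : List (σ ⊕ V)} (hw : w ∈ ρ X) {u u' : List (σ ⊕ V)} :
      TableStep ρ u u' → TableStep ρ (Sum.inr X :: u) (w ++ u')

/-- Applying a sequence of tables from left to right. -/
def SeqDerives {σ V : Type} :
    List (V → Set (List (σ ⊕ V))) → List (σ ⊕ V) → List (σ ⊕ V) → Prop
  | [], u, w => u = w
  | τ :: ts, u, w => ∃ v, TableStep τ u v ∧ SeqDerives ts v w

/-- An ET0L grammar over the terminal alphabet `σ`: finitely many non-terminals `V`,
a finite set `T` of tables (each table a finite set of context-free rules containing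
at least one rule for every non-terminal), a regular rational control, and a start symbol. -/
structure ET0LGrammar (σ : Type) where
  V : Type
  finV : Fintype V
  T : Type
  finT : Fintype T
  rules : T → V → List (List (σ ⊕ V))
  rules_nonempty : ∀ (τ : T) (X : V), rules τ X ≠ []
  control : Language T
  control_regular : IsRegularLang control
  start : V

/-- The set of replacement words a table of an ET0L grammar allows for a non-terminal. -/
def ET0LGrammar.ruleSet {σ : Type} (G : ET0LGrammar σ) (τ : G.T) :
    G.V → Set (List (σ ⊕ G.V)) :=
  fun X => {w | w ∈ G.rules τ X}

/-- The language generated by an ET0L grammar. -/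
def ET0LGrammar.language {σ : Type} (G : ET0LGrammar σ) : Language σ :=
  { w | ∃ ts : List G.T, ts ∈ G.control ∧
      SeqDerives (ts.map G.ruleSet) [Sum.inr G.start] (w.map Sum.inl) }

/-- `L` is an ET0L language. -/
def IsET0L {σ : Type} (L : Language σ) : Prop :=
  ∃ G : ET0LGrammar σ, G.language = L

/-- What the two stack heads of a cspd automaton see: the bottom-of-stack symbol `♭`
on both stacks, a pair (check-stack letter, top pushdown letter), or nothing (the
`(ε,ε)` observation, allowing a blind pushable transition). -/
inductive Obs (Δ Γ : Type) where
  | bottom : Obs Δ Γ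
  | pair : Δ → Γ → Obs Δ Γ
  | blind : Obs Δ Γ

/-- A check-stack pushdown (cspd) automaton with input alphabet `σ`:
finitely many states `Q`, pushdown alphabet `Γ`, check-stack alphabet `Δ`,
a regular language of allowed check-stacks, a finite transition relation,
a start state and a set of accepting states. -/
structure CSPD (σ : Type) where
  Q : Type
  finQ : Fintype Q
  Γ : Type
  finΓ : Fintype Γ
  Δ : Type
  finΔ : Fintype Δ
  checkLang : Language Δ
  check_regular : IsRegularLang checkLang
  trans : List ((Q × Option σ × Obs Δ Γ) × (Q × List Γ))
  start : Q
  accept : Set Q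

/-- `readsTo a w w'`: consuming `a` (possibly `ε`) from the input turns `w` into `w'`. -/
def readsTo {σ : Type} : Option σ → List σ → List σ → Prop
  | none, w, w' => w = w'
  | some a, w, w' => w = a :: w'

/-- One step of a cspd automaton with (immutable) check-stack `♭u`.  A configuration
`(q, inp, pd)` records the state, the remaining input, and the pushdown contents above
`♭` (head of the list = top).  The check-stack head position is tied to the pushdown
height: with pushdown height `h > 0` it sees the `h`-th letter of `u` above `♭`. -/
inductive CStep {σ : Type} (M : CSPD σ) (u : List M.Δ) :
    (M.Q × List σ × List M.Γ) → (M.Q × List σ × List M.Γ) → Prop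
  | bottom {p q : M.Q} {a : Option σ} {w : List M.Γ} {inp inp' : List σ}
      (ht : ((p, a, Obs.bottom), (q, w)) ∈ M.trans) (hr : readsTo a inp inp') :
      CStep M u (p, inp, []) (q, inp', w)
  | pop {p q : M.Q} {a : Option σ} {d : M.Δ} {g : M.Γ} {w pd : List M.Γ}
      {inp inp' : List σ}
      (ht : ((p, a, Obs.pair d g), (q, w)) ∈ M.trans)
      (hd : u[pd.length]? = some d) (hr : readsTo a inp inp') :
      CStep M u (p, inp, g :: pd) (q, inp', w ++ pd)
  | blind {p q : M.Q} {a : Option σ} {w pd : List M.Γ} {inp inp' : List σ}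
      (ht : ((p, a, Obs.blind), (q, w)) ∈ M.trans) (hr : readsTo a inp inp') :
      CStep M u (p, inp, pd) (q, inp', w ++ pd)

/-- The language recognised by a cspd automaton: words for which some run, over some
allowed check-stack, consumes the whole input and ends in an accepting state. -/
def CSPD.lang {σ : Type} (M : CSPD σ) : Language σ :=
  { w | ∃ u ∈ M.checkLang, ∃ q ∈ M.accept, ∃ pd : List M.Γ,
      Relation.ReflTransGen (CStep M u) (M.start, w, []) (q, [], pd) }

open Relation

namespace TableStep

variable {σ V : Type} {ρ : V → Set (List (σ ⊕ V))}

theorem append {u₁ u₂ v₁ v₂ : List (σ ⊕ V)} (h₁ : TableStep ρ u₁ v₁) (h₂ : TableStep ρ u₂ v₂) :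
    TableStep ρ (u₁ ++ u₂) (v₁ ++ v₂) := by
  induction h₁ with
  | nil => exact h₂
  | term a _ ih => exact .term a ih
  | nonterm X hw _ ih => simpa only [List.append_assoc] using .nonterm X hw ih

theorem exists_of_append {u₁ u₂ v : List (σ ⊕ V)} (h : TableStep ρ (u₁ ++ u₂) v) :
    ∃ v₁ v₂, v = v₁ ++ v₂ ∧ TableStep ρ u₁ v₁ ∧ TableStep ρ u₂ v₂ := by
  induction u₁ generalizing v with
  | nil => exact ⟨[], v, rfl, .nil, h⟩
  | cons x u₁ ih =>
    cases h with
    | term a h =>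
      obtain ⟨v₁, v₂, rfl, h₁, h₂⟩ := ih h
      exact ⟨_, v₂, rfl, .term a h₁, h₂⟩
    | nonterm X hw h =>
      obtain ⟨v₁, v₂, rfl, h₁, h₂⟩ := ih h
      exact ⟨_, v₂, (List.append_assoc ..).symm, .nonterm X hw h₁, h₂⟩

end TableStep

namespace SeqDerives

variable {σ V : Type} {ds : List (V → Set (List (σ ⊕ V)))}

theorem nil_left_iff {w : List (σ ⊕ V)} : SeqDerives ds [] w ↔ w = [] := by
  induction ds with
  | nil => exact eq_comm
  | cons ρ ds ih =>
    constructor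
    · rintro ⟨v, hv, h⟩
      cases hv
      exact ih.1 h
    · rintro rfl
      exact ⟨[], .nil, ih.2 rfl⟩

theorem append {u₁ u₂ w₁ w₂ : List (σ ⊕ V)} (h₁ : SeqDerives ds u₁ w₁)
    (h₂ : SeqDerives ds u₂ w₂) : SeqDerives ds (u₁ ++ u₂) (w₁ ++ w₂) := by
  induction ds generalizing u₁ u₂ with
  | nil => exact congrArg₂ _ h₁ h₂
  | cons ρ ds ih =>
    obtain ⟨v₁, hv₁, h₁⟩ := h₁
    obtain ⟨v₂, hv₂, h₂⟩ := h₂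
    exact ⟨v₁ ++ v₂, hv₁.append hv₂, ih h₁ h₂⟩

theorem exists_of_append {u₁ u₂ w : List (σ ⊕ V)} (h : SeqDerives ds (u₁ ++ u₂) w) :
    ∃ w₁ w₂, w = w₁ ++ w₂ ∧ SeqDerives ds u₁ w₁ ∧ SeqDerives ds u₂ w₂ := by
  induction ds generalizing u₁ u₂ with
  | nil => exact ⟨u₁, u₂, h.symm, rfl, rfl⟩
  | cons ρ ds ih =>
    obtain ⟨v, hv, h⟩ := h
    obtain ⟨v₁, v₂, rfl, hv₁, hv₂⟩ := hv.exists_of_append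
    obtain ⟨w₁, w₂, rfl, h₁, h₂⟩ := ih h
    exact ⟨w₁, w₂, rfl, ⟨v₁, hv₁, h₁⟩, ⟨v₂, hv₂, h₂⟩⟩

theorem cons_inl_iff {a : σ} {u w : List (σ ⊕ V)} :
    SeqDerives ds (.inl a :: u) w ↔ ∃ w', w = .inl a :: w' ∧ SeqDerives ds u w' := by
  induction ds generalizing u with
  | nil => exact ⟨fun h => ⟨u, h.symm, rfl⟩, fun ⟨_, hw, h⟩ => hw ▸ congrArg _ h⟩
  | cons ρ ds ih =>
    constructor
    · rintro ⟨_, hv, h⟩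
      cases hv with
      | term _ hv =>
        obtain ⟨w', rfl, h'⟩ := ih.1 h
        exact ⟨w', rfl, _, hv, h'⟩
    · rintro ⟨w', rfl, v, hv, h⟩
      exact ⟨_, .term a hv, ih.2 ⟨w', rfl, h⟩⟩

theorem cons_inr_iff {ρ : V → Set (List (σ ⊕ V))} {X : V} {u w : List (σ ⊕ V)} :
    SeqDerives (ρ :: ds) (.inr X :: u) w ↔
      ∃ r ∈ ρ X, ∃ w₁ w₂, w = w₁ ++ w₂ ∧ SeqDerives ds r w₁ ∧ SeqDerives (ρ :: ds) u w₂ := by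
  constructor
  · rintro ⟨_, hv, h⟩
    cases hv with
    | nonterm _ hr hv =>
      obtain ⟨w₁, w₂, rfl, h₁, h₂⟩ := h.exists_of_append
      exact ⟨_, hr, w₁, w₂, rfl, h₁, _, hv, h₂⟩
  · rintro ⟨r, hr, w₁, w₂, rfl, h₁, v, hv, h₂⟩
    exact ⟨r ++ v, .nonterm X hr hv, h₁.append h₂⟩

end SeqDerives

def List.markEnd {α : Type} (l : List α) : List (Option α) :=
  l.map some ++ [none]

namespace List

variable {α : Type}

theorem getElem?_markEnd {l : List α} {n : ℕ} (hn : n ≤ l.length) :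
    l.markEnd[n]? = some (l.drop n).head? := by
  rw [head?_drop]
  rcases hn.lt_or_eq with hn | rfl
  · rw [markEnd, getElem?_append_left (by simpa using hn)]
    simp [hn]
  · simp [markEnd]

theorem drop_eq_cons_of_getElem?_markEnd {l : List α} {n : ℕ} {a : α}
    (h : l.markEnd[n]? = some (some a)) : l.drop n = a :: l.drop (n + 1) := by
  have hn : n < l.length + 1 := by simpa [markEnd] using (getElem?_eq_some_iff.1 h).1
  rw [getElem?_markEnd (by omega), Option.some_inj, head?_eq_some_iff] at h
  obtain ⟨ys, hys⟩ := h
  rw [← tail_drop, hys, tail_cons]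

theorem markEnd_eq_none_cons_iff {l : List α} {u : List (Option α)} :
    l.markEnd = none :: u ↔ l = [] ∧ u = [] := by
  cases l <;> simp [markEnd]

theorem markEnd_eq_some_cons_iff {a : α} {l : List α} {u : List (Option α)} :
    l.markEnd = some a :: u ↔ ∃ l', l = a :: l' ∧ l'.markEnd = u := by
  cases l <;> simp [markEnd, and_comm]

end List

namespace DFA

variable {α Q : Type} (M : DFA α Q)

open Classical in
noncomputable def markEnd : DFA (Option α) (Q ⊕ Bool) where
  step
    | .inl q, some a => .inl (M.step q a)
    | .inl q, none => .inr (decide (q ∈ M.accept))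
    | .inr _, _ => .inr false
  start := .inl M.start
  accept := {.inr true}

theorem markEnd_evalFrom_inr_mem_accept {b : Bool} {u : List (Option α)} :
    M.markEnd.evalFrom (.inr b) u ∈ M.markEnd.accept ↔ u = [] ∧ b = true := by
  induction u generalizing b with
  | nil => simp [markEnd]
  | cons x u ih =>
    rw [evalFrom_cons, show M.markEnd.step (.inr b) x = .inr false from rfl, ih]
    simp

theorem markEnd_evalFrom_inl_mem_accept {q : Q} {u : List (Option α)} :
    M.markEnd.evalFrom (.inl q) u ∈ M.markEnd.accept ↔
      ∃ l, M.evalFrom q l ∈ M.accept ∧ l.markEnd = u := by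
  induction u generalizing q with
  | nil => simp [markEnd, List.markEnd]
  | cons x u ih =>
    cases x with
    | none =>
      rw [evalFrom_cons, show M.markEnd.step (.inl q) none = .inr _ from rfl,
        markEnd_evalFrom_inr_mem_accept]
      simp [List.markEnd_eq_none_cons_iff, and_comm]
    | some a =>
      rw [evalFrom_cons, show M.markEnd.step (.inl q) (some a) = .inl (M.step q a) from rfl, ih]
      simp [List.markEnd_eq_some_cons_iff]

theorem accepts_markEnd : M.markEnd.accepts = {u | ∃ l ∈ M.accepts, l.markEnd = u} := by
  ext u
  exact M.markEnd_evalFrom_inl_mem_accept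

end DFA

theorem Language.IsRegular.markEnd {α : Type} {L : Language α} (h : L.IsRegular) :
    Language.IsRegular {u | ∃ l ∈ L, l.markEnd = u} := by
  obtain ⟨Q, _, M, rfl⟩ := h
  exact ⟨Q ⊕ Bool, inferInstance, M.markEnd, M.accepts_markEnd⟩

namespace ET0LGrammar

variable {σ : Type} (G : ET0LGrammar σ)

attribute [local instance] finV finT

def cellWords : Set (List (σ ⊕ G.V)) :=
  {l | l <:+ [.inr G.start] ∨ ∃ τ X, ∃ r ∈ G.rules τ X, l <:+ r}

theorem finite_cellWords : G.cellWords.Finite := by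
  have hsuffixes (r : List (σ ⊕ G.V)) : {l | l <:+ r}.Finite := by
    simpa only [← List.mem_tails] using r.tails.finite_toSet
  refine ((hsuffixes [.inr G.start]).union (Set.finite_iUnion fun τ => Set.finite_iUnion fun X =>
    (G.rules τ X).finite_toSet.biUnion fun r _ => hsuffixes r)).subset ?_
  rintro l (hl | ⟨τ, X, r, hr, hl⟩)
  · exact .inl hl
  · exact .inr (Set.mem_iUnion₂.2 ⟨τ, X, Set.mem_biUnion hr hl⟩)

abbrev Cell : Type := G.cellWords

noncomputable instance : Fintype G.Cell := G.finite_cellWords.fintype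

def startCell : G.Cell := ⟨[.inr G.start], .inl List.suffix_rfl⟩

def rhsCell {τ : G.T} {X : G.V} {r : List (σ ⊕ G.V)} (hr : r ∈ G.rules τ X) : G.Cell :=
  ⟨r, .inr ⟨τ, X, r, hr, List.suffix_rfl⟩⟩

variable {G} in
def Cell.tail (c : G.Cell) : G.Cell :=
  ⟨c.1.tail, c.2.imp (c.1.tail_suffix.trans ·) fun ⟨τ, X, r, hr, hc⟩ =>
    ⟨τ, X, r, hr, c.1.tail_suffix.trans hc⟩⟩

variable {G} in
theorem Cell.val_tail_of_val_eq_cons {c : G.Cell} {x : σ ⊕ G.V} {rest : List (σ ⊕ G.V)}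
    (hc : c.1 = x :: rest) : c.tail.1 = rest := by
  simp [Cell.tail, hc]

inductive Phase
  | init
  | run
  | done
  deriving DecidableEq

instance : Fintype Phase := ⟨{.init, .run, .done}, fun q => by cases q <;> simp⟩

abbrev Transition : Type := (Phase × Option σ × Obs (Option G.T) G.Cell) × (Phase × List G.Cell)

inductive Move : G.Transition → Prop
  | start : Move ((.init, none, .bottom), (.run, [G.startCell]))
  | finish : Move ((.run, none, .bottom), (.done, []))
  | pop (d : Option G.T) {c : G.Cell} (hc : c.1 = []) :
      Move ((.run, none, .pair d c), (.run, []))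
  | read (d : Option G.T) {c : G.Cell} {a : σ} {rest : List (σ ⊕ G.V)}
      (hc : c.1 = .inl a :: rest) :
      Move ((.run, some a, .pair d c), (.run, [c.tail]))
  | rewrite (τ : G.T) {c : G.Cell} {X : G.V} {rest : List (σ ⊕ G.V)}
      (hc : c.1 = .inr X :: rest) {r : List (σ ⊕ G.V)} (hr : r ∈ G.rules τ X) :
      Move ((.run, none, .pair (some τ) c), (.run, [G.rhsCell hr, c.tail]))

theorem finite_setOf_move : {e | G.Move e}.Finite := by
  let popMove (x : Option G.T × G.Cell) : G.Transition := ((.run, none, .pair x.1 x.2), (.run, []))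
  let readMove (x : Option G.T × G.Cell) : G.Transition :=
    ((.run, x.2.1.head?.bind Sum.getLeft?, .pair x.1 x.2), (.run, [x.2.tail]))
  let rewriteMove (x : G.T × G.Cell × G.Cell) : G.Transition :=
    ((.run, none, .pair (some x.1) x.2.1), (.run, [x.2.2, x.2.1.tail]))
  refine ((((Set.finite_range popMove).union (Set.finite_range readMove)).union
    (Set.finite_range rewriteMove)).insert ((.run, none, .bottom), (.done, []))).insert
      ((.init, none, .bottom), (.run, [G.startCell])) |>.subset ?_
  rintro e (_ | _ | ⟨d, hc⟩ | @⟨d, c, a, rest, hc⟩ | ⟨τ, hc, hr⟩)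
  · exact .inl rfl
  · exact .inr (.inl rfl)
  · exact .inr (.inr (.inl (.inl ⟨(d, _), rfl⟩)))
  · exact .inr (.inr (.inl (.inr ⟨(d, c), by simp [readMove, hc]⟩)))
  · exact .inr (.inr (.inr ⟨(τ, _, G.rhsCell hr), rfl⟩))

noncomputable abbrev toCSPD : CSPD σ where
  Q := Phase
  finQ := inferInstance
  Γ := G.Cell
  finΓ := inferInstance
  Δ := Option G.T
  finΔ := inferInstance
  checkLang := {u | ∃ ts ∈ G.control, ts.markEnd = u}
  check_regular := Language.IsRegular.markEnd G.control_regular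
  trans := G.finite_setOf_move.toFinset.toList
  start := .init
  accept := {.done}

theorem mem_toCSPD_trans {e : G.Transition} : e ∈ G.toCSPD.trans ↔ G.Move e :=
  Finset.mem_toList.trans G.finite_setOf_move.mem_toFinset

def StackYields (ts : List G.T) : List G.Cell → List σ → Prop
  | [], out => out = []
  | c :: pd, out => ∃ o₁ o₂, out = o₁ ++ o₂ ∧
      SeqDerives ((ts.drop pd.length).map G.ruleSet) c.1 (o₁.map .inl) ∧ StackYields ts pd o₂

/-- Holds at every configuration from which an accepting run over the check-stack
`ts.markEnd` starts. -/
def RunInvariant (ts : List G.T) : Phase × List σ × List G.Cell → Prop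
  | (.init, inp, _) => SeqDerives (ts.map G.ruleSet) [.inr G.start] (inp.map .inl)
  | (.run, inp, pd) => G.StackYields ts pd inp
  | (.done, inp, _) => inp = []

variable {G}

theorem runInvariant_of_cStep {ts : List G.T} {x y : G.toCSPD.Q × List σ × List G.toCSPD.Γ}
    (h : CStep G.toCSPD ts.markEnd x y) (hy : G.RunInvariant ts y) : G.RunInvariant ts x := by
  cases h with
  | bottom ht hr =>
    cases G.mem_toCSPD_trans.1 ht with
    | start =>
      cases hr
      obtain ⟨o₁, o₂, rfl, h, rfl⟩ := hy
      simpa [RunInvariant, startCell] using h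
    | finish =>
      cases hr
      exact hy
  | pop ht hd hr =>
    cases G.mem_toCSPD_trans.1 ht with
    | pop d hc =>
      cases hr
      exact ⟨[], _, rfl, by rw [hc]; exact SeqDerives.nil_left_iff.2 rfl, hy⟩
    | read d hc =>
      cases hr
      obtain ⟨o₁, o₂, rfl, h₁, h₂⟩ := hy
      refine ⟨_ :: o₁, o₂, rfl, ?_, h₂⟩
      rw [hc]
      exact SeqDerives.cons_inl_iff.2 ⟨_, rfl, Cell.val_tail_of_val_eq_cons hc ▸ h₁⟩
    | rewrite τ hc hr' =>
      cases hr
      simp only [List.cons_append, List.nil_append] at hy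
      obtain ⟨o₁, o₂, rfl, h₁, o₃, o₄, rfl, h₃, h₄⟩ := hy
      have hdrop := List.drop_eq_cons_of_getElem?_markEnd hd
      rw [Cell.val_tail_of_val_eq_cons hc, hdrop, List.map_cons] at h₃
      refine ⟨o₁ ++ o₃, o₄, (List.append_assoc ..).symm, ?_, h₄⟩
      rw [hc, hdrop, List.map_cons]
      exact SeqDerives.cons_inr_iff.2 ⟨_, hr', _, _, List.map_append .., h₁, h₃⟩
  | blind ht => nomatch G.mem_toCSPD_trans.1 ht

theorem mem_language_of_mem_toCSPD_lang {w : List σ} (hw : w ∈ G.toCSPD.lang) :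
    w ∈ G.language := by
  obtain ⟨_, ⟨ts, hts, rfl⟩, q, hq, pd, hrun⟩ := hw
  cases hq
  exact ⟨ts, hts, hrun.head_induction_on (motive := fun x _ => G.RunInvariant ts x) rfl
    fun h _ hy => runInvariant_of_cStep h hy⟩

theorem reflTransGen_cStep_of_seqDerives {ts : List G.T} {pd : List G.Cell}
    (hpd : pd.length ≤ ts.length) (c : G.Cell) {out : List σ} (inp : List σ)
    (h : SeqDerives ((ts.drop pd.length).map G.ruleSet) c.1 (out.map .inl)) :
    ReflTransGen (CStep G.toCSPD ts.markEnd) (.run, out ++ inp, c :: pd) (.run, inp, pd) := by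
  have hd := List.getElem?_markEnd hpd
  rcases hc : c.1 with _ | ⟨a | X, rest⟩
  · rw [hc, SeqDerives.nil_left_iff, List.map_eq_nil_iff] at h
    subst h
    exact .single (.pop (G.mem_toCSPD_trans.2 (.pop _ hc)) hd rfl)
  · rw [hc, SeqDerives.cons_inl_iff] at h
    obtain ⟨_, hout, h⟩ := h
    obtain ⟨_, out', rfl, ha, rfl⟩ := List.map_eq_cons_iff.1 hout
    cases Sum.inl_injective ha
    refine .head (.pop (G.mem_toCSPD_trans.2 (.read _ hc)) hd rfl) ?_
    exact reflTransGen_cStep_of_seqDerives hpd c.tail inp (Cell.val_tail_of_val_eq_cons hc ▸ h)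
  · obtain ⟨τ, ts', hts⟩ : ∃ τ ts', ts.drop pd.length = τ :: ts' := by
      rcases hts : ts.drop pd.length with _ | ⟨τ, ts'⟩
      · rw [hc, hts] at h
        cases out <;> cases h
      · exact ⟨τ, ts', rfl⟩
    rw [hc, hts, List.map_cons, SeqDerives.cons_inr_iff] at h
    obtain ⟨r, hr, _, _, hout, h₁, h₂⟩ := h
    obtain ⟨o₁, o₂, rfl, rfl, rfl⟩ := List.map_eq_append_iff.1 hout
    have hlt : pd.length < ts.length := by
      have := congrArg List.length hts
      simp only [List.length_drop, List.length_cons] at this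
      omega
    refine .head (.pop (G.mem_toCSPD_trans.2 (.rewrite τ hc hr)) (by rw [hd, hts]; rfl) rfl) ?_
    rw [List.append_assoc]
    refine .trans (reflTransGen_cStep_of_seqDerives (pd := c.tail :: pd) hlt (G.rhsCell hr)
      (o₂ ++ inp) ?_) (reflTransGen_cStep_of_seqDerives hpd c.tail inp ?_)
    · rwa [List.length_cons, ← List.tail_drop, hts]
    · rwa [hts, Cell.val_tail_of_val_eq_cons hc]
termination_by (ts.length - pd.length, c.1.length)
decreasing_by
  · exact .right _ (by simp [Cell.val_tail_of_val_eq_cons hc, hc])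
  · exact .left _ _ (by simp only [List.length_cons]; omega)
  · exact .right _ (by simp [Cell.val_tail_of_val_eq_cons hc, hc])

theorem mem_toCSPD_lang_of_mem_language {w : List σ} (hw : w ∈ G.language) :
    w ∈ G.toCSPD.lang := by
  obtain ⟨ts, hts, h⟩ := hw
  refine ⟨ts.markEnd, ⟨ts, hts, rfl⟩, .done, rfl, [], ?_⟩
  have hrun := reflTransGen_cStep_of_seqDerives (pd := []) (Nat.zero_le _) G.startCell [] h
  rw [List.append_nil] at hrun
  exact .head (.bottom (G.mem_toCSPD_trans.2 .start) rfl)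
    (hrun.tail (.bottom (G.mem_toCSPD_trans.2 .finish) rfl))

theorem lang_toCSPD : G.toCSPD.lang = G.language :=
  Set.ext fun _ => ⟨mem_language_of_mem_toCSPD_lang, mem_toCSPD_lang_of_mem_language⟩

end ET0LGrammar

theorem exists_cspd_of_ET0LGrammar_general (σ : Type) (G : ET0LGrammar σ) :
    ∃ M : CSPD σ, M.lang = G.language :=
  ⟨G.toCSPD, G.lang_toCSPD⟩

/-- For every ET0L grammar there is a cspd automaton recognising its language. -/
theorem exists_cspd_of_ET0LGrammar (σ : Type) [Fintype σ] (G : ET0LGrammar σ) :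
    ∃ M : CSPD σ, M.lang = G.language :=
  exists_cspd_of_ET0LGrammar_general σ G
end

section
/- For every check-stack pushdown (cspd) automaton M there exists a cspd automaton M' with L(M') = L(M) such that: (1) in every run of M' the height of the pushdown never exceeds the height of the check-stack; (2) M' has exactly one accepting state; (3) the pushdown of M' contains only the bottom symbol ♭ whenever M' enters its accepting state; (4) transitions of M' into the accepting state do not modify the pushdown; and (5) every transition of M' into a non-accepting state either pushes exactly one letter onto the pushdown or pops exactly one letter from the pushdown. -/
/-- `M.Reaches u w c`: starting in the initial configuration with input `w` and
check-stack `♭u`, the machine can reach configuration `c`. -/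
def CSPD.Reaches {σ : Type} (M : CSPD σ) (u : List M.Δ) (w : List σ)
    (c : M.Q × List σ × List M.Γ) : Prop :=
  Relation.ReflTransGen (CStep M u) (M.start, w, []) c

/-!
The normal form runs on the check-stack `u · padᵏ · top`, where `u` is a check-stack of `M`:
the padding leaves room for the part of `M`'s pushdown that lies above `u`, and the marked
letter `top` lets it refuse to push once the pushdown is as high as the check-stack. Each
transition of `M` is split into single pushes and pops: a transition reading a pushdown letter
pops it, any other one pushes a dummy letter and pops it again, and then the written word is
pushed letter by letter. In an accepting state of `M` the pushdown is emptied and the unique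
accepting state is entered. Conversely, every configuration the normal form reaches on
`u · padᵏ · top` encodes one that `M` reaches on `u`: drop the dummy letter and add the part
of the written word that is still to be pushed.
-/

theorem DFA.acceptsFrom_eq_of_forall_cons {α S : Type} (D : DFA α S) (P : S → Language α)
    (hnil : ∀ s, [] ∈ P s ↔ s ∈ D.accept)
    (hcons : ∀ s a x, a :: x ∈ P s ↔ x ∈ P (D.step s a)) (s : S) :
    D.acceptsFrom s = P s := by
  ext x
  induction x generalizing s with
  | nil => exact (hnil s).symm
  | cons a x ih => rw [hcons, ← ih, DFA.mem_acceptsFrom, DFA.mem_acceptsFrom, DFA.evalFrom_cons]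

instance {Δ Γ : Type} [Finite Δ] [Finite Γ] : Finite (Obs Δ Γ) :=
  Finite.of_injective
    (fun o => match o with
      | .bottom => (none : Option (Option (Δ × Γ)))
      | .blind => some none
      | .pair d g => some (some (d, g)))
    (by rintro (_ | ⟨d, g⟩ | _) (_ | ⟨d', g'⟩ | _) h <;> simp_all)

theorem CStep.pop_of_lt {σ : Type} {M : CSPD σ} {u : List M.Δ} {p q : M.Q} {a : Option σ}
    {g : M.Γ} {w pd : List M.Γ} {inp inp' : List σ}
    (ht : ∀ d, ((p, a, Obs.pair d g), (q, w)) ∈ M.trans) (hlt : pd.length < u.length)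
    (hr : readsTo a inp inp') : CStep M u (p, inp, g :: pd) (q, inp', w ++ pd) :=
  CStep.pop (ht _) (List.getElem?_eq_getElem hlt) hr

theorem CSPD.Reaches.tail {σ : Type} {M : CSPD σ} {u : List M.Δ} {w : List σ}
    {c c' : M.Q × List σ × List M.Γ}
    (h : M.Reaches u w c) (hs : CStep M u c c') : M.Reaches u w c' :=
  Relation.ReflTransGen.tail h hs

attribute [local instance] CSPD.finQ CSPD.finΓ CSPD.finΔ

namespace CSPD

inductive CheckLetter (Δ : Type)
  | letter (d : Δ)
  | pad
  | top
  deriving Fintype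

open CheckLetter

section PaddedCheckStack

variable {Δ : Type}

def padCheck (u : List Δ) (k : ℕ) : List (CheckLetter Δ) :=
  u.map letter ++ List.replicate k pad ++ [top]

@[simp]
theorem padCheck_cons (d : Δ) (u : List Δ) (k : ℕ) :
    padCheck (d :: u) k = letter d :: padCheck u k := rfl

@[simp]
theorem padCheck_nil_succ (k : ℕ) : padCheck ([] : List Δ) (k + 1) = pad :: padCheck [] k := rfl

@[simp]
theorem padCheck_nil_zero : padCheck ([] : List Δ) 0 = [top] := rfl

@[simp]
theorem length_padCheck (u : List Δ) (k : ℕ) : (padCheck u k).length = u.length + k + 1 := by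
  simp [padCheck, Nat.add_assoc]

theorem getElem?_padCheck (u : List Δ) (k i : ℕ) :
    (padCheck u k)[i]? =
      if i < u.length then u[i]?.map letter
      else if i < u.length + k then some pad
      else if i = u.length + k then some top else none := by
  induction u generalizing i with
  | nil =>
    induction k generalizing i with
    | zero => rcases i with _ | i <;> simp
    | succ k ih => rcases i with _ | i <;> simp [ih]
  | cons d u ih =>
    rcases i with _ | i <;> simp [ih, Nat.add_right_comm u.length 1 k]

theorem getElem?_padCheck_eq_letter_iff {u : List Δ} {k i : ℕ} {d : Δ} :
    (padCheck u k)[i]? = some (letter d) ↔ u[i]? = some d := by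
  rw [getElem?_padCheck]
  split_ifs <;> simp_all

theorem exists_getElem?_padCheck_ne_top {u : List Δ} {k i : ℕ} (hi : i < u.length + k) :
    ∃ c, (padCheck u k)[i]? = some c ∧ c ≠ top := by
  rw [getElem?_padCheck]
  split_ifs with h
  · exact ⟨letter u[i], by simp [List.getElem?_eq_getElem h], by simp⟩
  · exact ⟨pad, rfl, by simp⟩

theorem lt_of_getElem?_padCheck_eq {u : List Δ} {k i : ℕ} {c : CheckLetter Δ}
    (h : (padCheck u k)[i]? = some c) (hc : c ≠ top) : i < u.length + k := by
  rw [getElem?_padCheck] at h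
  split_ifs at h <;> first | omega | simp_all

def padLang (L : Language Δ) : Language (CheckLetter Δ) :=
  {w | ∃ u ∈ L, ∃ k, w = padCheck u k}

theorem nil_notMem_padLang (L : Language Δ) : [] ∉ padLang L := by
  rintro ⟨u, -, k, h⟩
  simpa using congrArg List.length h

theorem letter_cons_mem_padLang {L : Language Δ} {d : Δ} {w : List (CheckLetter Δ)} :
    letter d :: w ∈ padLang L ↔ w ∈ padLang {u | d :: u ∈ L} := by
  constructor
  · rintro ⟨_ | ⟨d', u⟩, hu, k, h⟩
    · cases k <;> simp at h
    · simp only [padCheck_cons, List.cons.injEq, letter.injEq] at h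
      obtain ⟨rfl, rfl⟩ := h
      exact ⟨u, hu, k, rfl⟩
  · rintro ⟨u, hu, k, rfl⟩
    exact ⟨d :: u, hu, k, rfl⟩

theorem pad_cons_mem_padLang {L : Language Δ} {w : List (CheckLetter Δ)} :
    pad :: w ∈ padLang L ↔ [] ∈ L ∧ w ∈ padLang 1 := by
  constructor
  · rintro ⟨_ | ⟨d', u⟩, hu, _ | k, h⟩ <;> simp at h
    exact ⟨hu, [], rfl, k, h⟩
  · rintro ⟨hL, u, rfl, k, rfl⟩
    exact ⟨[], hL, k + 1, rfl⟩

theorem top_cons_mem_padLang {L : Language Δ} {w : List (CheckLetter Δ)} :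
    top :: w ∈ padLang L ↔ [] ∈ L ∧ w = [] := by
  constructor
  · rintro ⟨_ | ⟨d', u⟩, hu, _ | k, h⟩ <;> simp at h
    exact ⟨hu, h⟩
  · rintro ⟨hL, rfl⟩
    exact ⟨[], hL, 0, rfl⟩

inductive PadState (S : Type)
  | reading (s : S)
  | padding
  | done
  | dead
  deriving Fintype

open PadState Classical in
noncomputable def padDFA {S : Type} (D : DFA Δ S) : DFA (CheckLetter Δ) (PadState S) where
  step
    | reading s, letter d => reading (D.step s d)
    | reading s, pad => if s ∈ D.accept then padding else dead
    | reading s, top => if s ∈ D.accept then done else dead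
    | padding, pad => padding
    | padding, top => done
    | _, _ => dead
  start := reading D.start
  accept := {done}

theorem padDFA_accepts {S : Type} (D : DFA Δ S) : (padDFA D).accepts = padLang D.accepts := by
  let P : PadState S → Language (CheckLetter Δ)
    | .reading s => padLang (D.acceptsFrom s)
    | .padding => padLang 1
    | .done => 1
    | .dead => 0
  refine DFA.acceptsFrom_eq_of_forall_cons (padDFA D) P ?_ ?_ (.reading D.start)
  · rintro (s | _ | _ | _) <;> simp [P, padDFA, nil_notMem_padLang, Language.notMem_zero]
  · rintro (s | _ | _ | _) (d | _ | _) x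
    case reading.letter => exact letter_cons_mem_padLang
    case reading.pad | reading.top =>
      by_cases hs : s ∈ D.accept <;>
        simp [P, padDFA, hs, pad_cons_mem_padLang, top_cons_mem_padLang, DFA.mem_acceptsFrom]
    case padding.letter =>
      simp only [P, padDFA, letter_cons_mem_padLang, Language.mem_one]
      exact ⟨fun ⟨_, hu, _⟩ => List.cons_ne_nil _ _ hu,
        fun h => (Language.notMem_zero x h).elim⟩
    all_goals simp [P, padDFA, pad_cons_mem_padLang, top_cons_mem_padLang, Language.mem_one,
      Language.notMem_zero]

theorem isRegularLang_padLang {L : Language Δ} (h : IsRegularLang L) :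
    IsRegularLang (padLang L) := by
  obtain ⟨S, _, D, rfl⟩ := h
  exact ⟨PadState S, inferInstance, padDFA D, padDFA_accepts D⟩

end PaddedCheckStack

variable {σ : Type} (M : CSPD σ)

def pendingBound : ℕ := (M.trans.map fun t => t.2.2.length).sum

abbrev Pending : Type := {rw : List M.Γ // rw.length ≤ M.pendingBound}

noncomputable instance : Fintype M.Pending :=
  have : Finite M.Pending := (List.finite_length_le M.Γ M.pendingBound).to_subtype
  Fintype.ofFinite _

def Pending.nil : M.Pending := ⟨[], Nat.zero_le _⟩

@[simp]
theorem Pending.coe_nil : (Pending.nil M).1 = [] := rfl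

def pendingOf {t} (ht : t ∈ M.trans) : M.Pending :=
  ⟨t.2.2.reverse, by
    simpa [pendingBound] using
      List.le_sum_of_mem (List.mem_map_of_mem (f := fun t => t.2.2.length) ht)⟩

@[simp]
theorem coe_pendingOf {t} (ht : t ∈ M.trans) : (M.pendingOf ht).1 = t.2.2.reverse := rfl

/-- `run q rw` simulates `M` in state `q` once the letters of `rw` are pushed, head first;
`popThen q rw` first pops the dummy letter `none`. -/
inductive NFState (Q P : Type)
  | run (q : Q) (rw : P)
  | popThen (q : Q) (rw : P)
  | drain
  | accept
  deriving Fintype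

open NFState

abbrev NFTransition : Type :=
  (NFState M.Q M.Pending × Option σ × Obs (CheckLetter M.Δ) (Option M.Γ)) ×
    (NFState M.Q M.Pending × List (Option M.Γ))

inductive NFTrans : M.NFTransition → Prop
  | simBottom {p a q w} (ht : ((p, a, Obs.bottom), (q, w)) ∈ M.trans) :
      NFTrans ((run p (Pending.nil M), a, .bottom), (popThen q (M.pendingOf ht), [none]))
  | simBlindBottom {p a q w} (ht : ((p, a, Obs.blind), (q, w)) ∈ M.trans) :
      NFTrans ((run p (Pending.nil M), a, .bottom), (popThen q (M.pendingOf ht), [none]))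
  | simBlindPair {p a q w} (ht : ((p, a, Obs.blind), (q, w)) ∈ M.trans) {c} (hc : c ≠ top) (g) :
      NFTrans ((run p (Pending.nil M), a, .pair c g), (popThen q (M.pendingOf ht), [none, g]))
  | simPair {p a d g q w} (ht : ((p, a, Obs.pair d g), (q, w)) ∈ M.trans) :
      NFTrans ((run p (Pending.nil M), a, .pair (letter d) (some g)), (run q (M.pendingOf ht), []))
  | popDummy (q rw c) : NFTrans ((popThen q rw, none, .pair c none), (run q rw, []))
  | pushBottom (q) {rw rw' : M.Pending} {y} (h : rw.1 = y :: rw'.1) :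
      NFTrans ((run q rw, none, .bottom), (run q rw', [some y]))
  | pushPair (q) {rw rw' : M.Pending} {y} (h : rw.1 = y :: rw'.1) {c} (hc : c ≠ top) (g) :
      NFTrans ((run q rw, none, .pair c g), (run q rw', [some y, g]))
  | acceptBottom {f} (hf : f ∈ M.accept) :
      NFTrans ((run f (Pending.nil M), none, .bottom), (NFState.accept, []))
  | startDrain {f} (hf : f ∈ M.accept) (c g) :
      NFTrans ((run f (Pending.nil M), none, .pair c g), (drain, []))
  | drainPop (c g) : NFTrans ((drain, none, .pair c g), (drain, []))
  | drainDone : NFTrans ((drain, none, .bottom), (NFState.accept, []))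

namespace NFTrans

variable {M}

theorem input_mem {t : M.NFTransition} (h : M.NFTrans t) :
    t.1.2.1 ∈ insert none ((fun t' => t'.1.2.1) '' {t' | t' ∈ M.trans}) := by
  cases h <;>
    first | exact Set.mem_insert _ _ | exact Set.mem_insert_of_mem _ ⟨_, ‹_›, rfl⟩

theorem length_le_two {t : M.NFTransition} (h : M.NFTrans t) : t.2.2.length ≤ 2 := by
  cases h <;> simp

theorem not_blind {p a q v} : ¬ M.NFTrans ((p, a, .blind), (q, v)) := by
  rintro ⟨⟩

theorem of_bottom {p a q v} (h : M.NFTrans ((p, a, .bottom), (q, v))) :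
    (q = .accept → v = []) ∧ (q ≠ .accept → v.length = 1) := by
  cases h <;> simp

theorem of_pair {p a c g q v} (h : M.NFTrans ((p, a, .pair c g), (q, v))) :
    q ≠ .accept ∧ (v = [] ∨ c ≠ top ∧ ∃ x, v = [x, g]) := by
  cases h <;> simp [*]

end NFTrans

theorem finite_setOf_nfTrans : {t | M.NFTrans t}.Finite := by
  refine (((Set.finite_univ.prod (((M.trans.finite_toSet.image fun t' => t'.1.2.1).insert none).prod
    Set.finite_univ)).prod (Set.finite_univ.prod (List.finite_length_le _ 2)))).subset ?_
  intro t ht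
  exact ⟨⟨trivial, ht.input_mem, trivial⟩, trivial, ht.length_le_two⟩

noncomputable abbrev normalForm : CSPD σ where
  Q := NFState M.Q M.Pending
  finQ := inferInstance
  Γ := Option M.Γ
  finΓ := inferInstance
  Δ := CheckLetter M.Δ
  finΔ := inferInstance
  checkLang := padLang M.checkLang
  check_regular := isRegularLang_padLang M.check_regular
  trans := M.finite_setOf_nfTrans.toFinset.toList
  start := run M.start (Pending.nil M)
  accept := {NFState.accept}

@[simp]
theorem mem_normalForm_trans {t : M.NFTransition} : t ∈ M.normalForm.trans ↔ M.NFTrans t :=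
  Finset.mem_toList.trans (Set.Finite.mem_toFinset _)

variable {M}

section Forward

variable {u : List M.Δ} {k : ℕ}

theorem normalForm_push_step {s s' : NFState M.Q M.Pending} {a : Option σ} {x : Option M.Γ}
    {inp inp' : List σ} {pd : List (Option M.Γ)}
    (hb : M.NFTrans ((s, a, .bottom), (s', [x])))
    (hp : ∀ c, c ≠ top → ∀ g, M.NFTrans ((s, a, .pair c g), (s', [x, g])))
    (hr : readsTo a inp inp') (hlen : pd.length ≤ u.length + k) :
    CStep M.normalForm (padCheck u k) (s, inp, pd) (s', inp', x :: pd) := by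
  cases pd with
  | nil => exact CStep.bottom (M.mem_normalForm_trans.mpr hb) hr
  | cons g pd =>
    obtain ⟨c, hc, hct⟩ := exists_getElem?_padCheck_ne_top (u := u) (k := k) (i := pd.length)
      (by rw [List.length_cons] at hlen; omega)
    exact CStep.pop (M.mem_normalForm_trans.mpr (hp c hct g)) hc hr

theorem normalForm_pop_step {s s' : NFState M.Q M.Pending} {g : Option M.Γ} {inp : List σ}
    {pd : List (Option M.Γ)} (hp : ∀ c, M.NFTrans ((s, none, .pair c g), (s', [])))
    (hlen : pd.length ≤ u.length + k) :
    CStep M.normalForm (padCheck u k) (s, inp, g :: pd) (s', inp, pd) :=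
  CStep.pop_of_lt (fun c => M.mem_normalForm_trans.mpr (hp c)) (by rw [length_padCheck]; omega) rfl

theorem normalForm_reaches_push (q : M.Q) (rw : M.Pending) (inp : List σ)
    (pd : List (Option M.Γ)) (hlen : pd.length + rw.1.length ≤ u.length + k) :
    Relation.ReflTransGen (CStep M.normalForm (padCheck u k))
      (run q rw, inp, pd) (run q (Pending.nil M), inp, rw.1.reverse.map some ++ pd) := by
  obtain ⟨l, hl⟩ := rw
  induction l generalizing pd with
  | nil => rfl
  | cons y l ih =>
    have hl' : l.length ≤ M.pendingBound := le_trans (by simp) hl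
    refine .head (normalForm_push_step (s' := run q ⟨l, hl'⟩) (.pushBottom q rfl)
      (fun c hc g => .pushPair q rfl hc g) rfl (by rw [List.length_cons] at hlen; omega)) ?_
    simpa using ih (some y :: pd) hl' (by simp only [List.length_cons] at hlen ⊢; omega)

theorem normalForm_reaches_popThen (q : M.Q) (rw : M.Pending) (inp : List σ)
    (pd : List (Option M.Γ)) (hlen : pd.length + rw.1.length ≤ u.length + k) :
    Relation.ReflTransGen (CStep M.normalForm (padCheck u k))
      (popThen q rw, inp, none :: pd) (run q (Pending.nil M), inp, rw.1.reverse.map some ++ pd) :=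
  .head (normalForm_pop_step (fun c => .popDummy q rw c) (by omega))
    (normalForm_reaches_push q rw inp pd hlen)

theorem normalForm_simulate_step {p q : M.Q} {inp inp' : List σ} {pd pd' : List M.Γ}
    (h : CStep M u (p, inp, pd) (q, inp', pd')) (hpd : pd.length ≤ u.length + k)
    (hpd' : pd'.length ≤ u.length + k) :
    Relation.ReflTransGen (CStep M.normalForm (padCheck u k))
      (run p (Pending.nil M), inp, pd.map some) (run q (Pending.nil M), inp', pd'.map some) := by
  cases h with
  | bottom ht hr =>
    refine .head (CStep.bottom (M.mem_normalForm_trans.mpr (.simBottom ht)) hr) ?_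
    simpa using normalForm_reaches_popThen q (M.pendingOf ht) inp' [] (by simpa using hpd')
  | pop ht hd hr =>
    refine .head (CStep.pop (M.mem_normalForm_trans.mpr (.simPair ht))
      (by simpa [getElem?_padCheck_eq_letter_iff] using hd) hr) ?_
    simpa using normalForm_reaches_push q (M.pendingOf ht) inp' _ (by
      simp only [List.length_append, List.length_map, coe_pendingOf, List.length_reverse] at *
      omega)
  | blind ht hr =>
    refine .head (normalForm_push_step (.simBlindBottom ht) (fun c hc g => .simBlindPair ht hc g)
      hr (by simpa using hpd)) ?_
    simpa using normalForm_reaches_popThen q (M.pendingOf ht) inp' _ (by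
      simp only [List.length_append, List.length_map, coe_pendingOf, List.length_reverse] at *
      omega)

theorem normalForm_simulate {c c' : M.Q × List σ × List M.Γ}
    (h : Relation.ReflTransGen (CStep M u) c c') :
    ∃ K, ∀ k ≥ K, Relation.ReflTransGen (CStep M.normalForm (padCheck u k))
      (run c.1 (Pending.nil M), c.2.1, c.2.2.map some)
      (run c'.1 (Pending.nil M), c'.2.1, c'.2.2.map some) := by
  induction h with
  | refl => exact ⟨0, fun _ _ => .refl⟩
  | @tail b c' _ hstep ih =>
    obtain ⟨K, hK⟩ := ih
    refine ⟨max K (b.2.2.length + c'.2.2.length), fun k hk =>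
      (hK k (le_of_max_le_left hk)).trans ?_⟩
    have := le_of_max_le_right hk
    exact normalForm_simulate_step hstep (by omega) (by omega)

theorem normalForm_reaches_drain (inp : List σ) (pd : List (Option M.Γ))
    (hlen : pd.length ≤ u.length + k + 1) :
    Relation.ReflTransGen (CStep M.normalForm (padCheck u k))
      (drain, inp, pd) (NFState.accept, inp, []) := by
  induction pd with
  | nil => exact .single (CStep.bottom (M.mem_normalForm_trans.mpr .drainDone) rfl)
  | cons g pd ih =>
    rw [List.length_cons] at hlen
    exact .head (normalForm_pop_step (fun c => .drainPop c g) (by omega)) (ih (by omega))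

theorem normalForm_reaches_accept {f : M.Q} (hf : f ∈ M.accept) (inp : List σ) (pd : List M.Γ)
    (hlen : pd.length ≤ u.length + k + 1) :
    Relation.ReflTransGen (CStep M.normalForm (padCheck u k))
      (run f (Pending.nil M), inp, pd.map some) (NFState.accept, inp, []) := by
  cases pd with
  | nil => exact .single (CStep.bottom (M.mem_normalForm_trans.mpr (.acceptBottom hf)) rfl)
  | cons g pd =>
    rw [List.length_cons] at hlen
    exact .head (normalForm_pop_step (fun c => .startDrain hf c _) (by rw [List.length_map]; omega))
      (normalForm_reaches_drain inp _ (by rw [List.length_map]; omega))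

end Forward

theorem lang_le_normalForm_lang : M.lang ≤ M.normalForm.lang := by
  rintro w ⟨u, hu, f, hf, pd, hrun⟩
  obtain ⟨K, hK⟩ := normalForm_simulate hrun
  refine ⟨padCheck u (max K pd.length), ⟨u, hu, _, rfl⟩, .accept, rfl, [],
    (hK _ (le_max_left _ _)).trans (normalForm_reaches_accept hf [] pd ?_)⟩
  have := le_max_right K pd.length
  omega

variable (M) in
def Simulates (u : List M.Δ) (w : List σ) :
    NFState M.Q M.Pending × List σ × List (Option M.Γ) → Prop
  | (run q rw, inp, pd') => ∃ pd, pd' = pd.map some ∧ M.Reaches u w (q, inp, rw.1.reverse ++ pd)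
  | (popThen q rw, inp, pd') =>
      ∃ pd, pd' = none :: pd.map some ∧ M.Reaches u w (q, inp, rw.1.reverse ++ pd)
  | (_, inp, _) => ∃ f ∈ M.accept, ∃ pd, M.Reaches u w (f, inp, pd)

section Backward

variable {u : List M.Δ} {k : ℕ} {w : List σ} {p q : NFState M.Q M.Pending} {a : Option σ}
  {inp inp' : List σ} {v : List (Option M.Γ)}

theorem Simulates.of_bottom_step (hc : M.Simulates u w (p, inp, []))
    (ht : M.NFTrans ((p, a, .bottom), (q, v))) (hr : readsTo a inp inp') :
    M.Simulates u w (q, inp', v) := by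
  cases ht with
  | simBottom ht' =>
    obtain ⟨pd, hpd, hre⟩ := hc
    obtain rfl : pd = [] := by simpa using hpd.symm
    exact ⟨[], rfl, by simpa using hre.tail (CStep.bottom ht' hr)⟩
  | simBlindBottom ht' =>
    obtain ⟨pd, hpd, hre⟩ := hc
    obtain rfl : pd = [] := by simpa using hpd.symm
    exact ⟨[], rfl, by simpa using hre.tail (CStep.blind ht' hr)⟩
  | pushBottom q hrw =>
    obtain ⟨pd, hpd, hre⟩ := hc
    obtain rfl : pd = [] := by simpa using hpd.symm
    simp only [readsTo] at hr
    exact ⟨[_], rfl, by simpa [hrw, hr] using hre⟩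
  | acceptBottom hf =>
    obtain ⟨pd, -, hre⟩ := hc
    exact ⟨_, hf, pd, hr ▸ hre⟩
  | drainDone => exact hr ▸ hc

theorem Simulates.of_pop_step {c : CheckLetter M.Δ} {g : Option M.Γ} {pd : List (Option M.Γ)}
    (hc : M.Simulates u w (p, inp, g :: pd)) (ht : M.NFTrans ((p, a, .pair c g), (q, v)))
    (hd : (padCheck u k)[pd.length]? = some c) (hr : readsTo a inp inp') :
    M.Simulates u w (q, inp', v ++ pd) := by
  cases ht with
  | simBlindPair ht' _ _ =>
    obtain ⟨pd, hpd, hre⟩ := hc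
    exact ⟨pd, by rw [← hpd]; rfl, by simpa using hre.tail (CStep.blind ht' hr)⟩
  | @simPair _ _ d _ _ _ ht' =>
    obtain ⟨_ | ⟨g, pd⟩, hpd, hre⟩ := hc
    · simp at hpd
    · simp only [List.map_cons, List.cons.injEq, Option.some.injEq] at hpd
      obtain ⟨rfl, rfl⟩ := hpd
      have hd' : u[pd.length]? = some d := by simpa [getElem?_padCheck_eq_letter_iff] using hd
      exact ⟨pd, rfl, by simpa using hre.tail (CStep.pop ht' hd' hr)⟩
  | popDummy q rw c =>
    obtain ⟨pd, hpd, hre⟩ := hc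
    exact ⟨pd, (List.cons.inj hpd).2, hr ▸ hre⟩
  | @pushPair q _ _ y hrw _ _ g =>
    obtain ⟨pd, hpd, hre⟩ := hc
    simp only [readsTo] at hr
    exact ⟨y :: pd, by rw [List.map_cons, ← hpd]; rfl, by simpa [hrw, hr] using hre⟩
  | startDrain hf c g =>
    obtain ⟨pd, -, hre⟩ := hc
    exact ⟨_, hf, pd, hr ▸ hre⟩
  | drainPop c g => exact hr ▸ hc

theorem Simulates.of_reaches {c : M.normalForm.Q × List σ × List M.normalForm.Γ}
    (h : M.normalForm.Reaches (padCheck u k) w c) : M.Simulates u w c := by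
  induction h with
  | refl => exact ⟨[], rfl, .refl⟩
  | tail _ hstep ih =>
    cases hstep with
    | bottom ht hr => exact ih.of_bottom_step (M.mem_normalForm_trans.mp ht) hr
    | pop ht hd hr => exact ih.of_pop_step (M.mem_normalForm_trans.mp ht) hd hr
    | blind ht _ => exact (NFTrans.not_blind (M.mem_normalForm_trans.mp ht)).elim

end Backward

theorem normalForm_lang_le_lang : M.normalForm.lang ≤ M.lang := by
  rintro w ⟨_, ⟨u, hu, k, rfl⟩, q, rfl, pd, hrun⟩
  obtain ⟨f, hf, pd, hre⟩ := Simulates.of_reaches hrun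
  exact ⟨u, hu, f, hf, pd, hre⟩

theorem normalForm_lang : M.normalForm.lang = M.lang :=
  le_antisymm normalForm_lang_le_lang lang_le_normalForm_lang

theorem normalForm_height_le {u : List M.normalForm.Δ} (hu : u ∈ M.normalForm.checkLang)
    {w : List σ} {c : M.normalForm.Q × List σ × List M.normalForm.Γ}
    (h : M.normalForm.Reaches u w c) : c.2.2.length ≤ u.length := by
  obtain ⟨u, -, k, rfl⟩ := hu
  induction h with
  | refl => simp
  | tail _ hstep _ =>
    cases hstep with
    | @bottom _ q _ v _ _ ht _ =>
      have h := (M.mem_normalForm_trans.mp ht).of_bottom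
      have : v.length ≤ 1 := by
        by_cases hq : q = .accept
        · simp [h.1 hq]
        · simp [h.2 hq]
      show v.length ≤ (padCheck u k).length
      rw [length_padCheck]; omega
    | pop ht hd _ =>
      have hlt := (List.getElem?_eq_some_iff.mp hd).1
      rcases (M.mem_normalForm_trans.mp ht).of_pair.2 with rfl | ⟨hc, x, rfl⟩
      · simp only [length_padCheck, List.nil_append] at hlt ⊢; omega
      · have := lt_of_getElem?_padCheck_eq hd hc
        simp only [List.cons_append, List.nil_append, List.length_cons, length_padCheck]; omega
    | blind ht _ => exact (NFTrans.not_blind (M.mem_normalForm_trans.mp ht)).elim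

theorem normalForm_pushdown_eq_nil {u : List M.normalForm.Δ} {w : List σ}
    {c : M.normalForm.Q × List σ × List M.normalForm.Γ} (h : M.normalForm.Reaches u w c)
    (hc : c.1 ∈ M.normalForm.accept) : c.2.2 = [] := by
  induction h with
  | refl => simp [normalForm] at hc
  | tail _ hstep _ =>
    cases hstep with
    | bottom ht _ => exact (M.mem_normalForm_trans.mp ht).of_bottom.1 hc
    | pop ht _ _ => exact ((M.mem_normalForm_trans.mp ht).of_pair.1 hc).elim
    | blind ht _ => exact (NFTrans.not_blind (M.mem_normalForm_trans.mp ht)).elim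

theorem normalForm_trans_to_accept {p : M.normalForm.Q} {a : Option σ}
    {o : Obs M.normalForm.Δ M.normalForm.Γ} {q : M.normalForm.Q} {v : List M.normalForm.Γ}
    (ht : ((p, a, o), (q, v)) ∈ M.normalForm.trans) (hq : q ∈ M.normalForm.accept) :
    (o = Obs.bottom → v = []) ∧ (∀ d g, o = Obs.pair d g → v = [g]) ∧
      (o = Obs.blind → v = []) := by
  have ht := M.mem_normalForm_trans.mp ht
  refine ⟨?_, ?_, ?_⟩
  · rintro rfl
    exact ht.of_bottom.1 hq
  · rintro d g rfl
    exact (ht.of_pair.1 hq).elim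
  · rintro rfl
    exact (NFTrans.not_blind ht).elim

theorem normalForm_trans_to_nonaccept {p : M.normalForm.Q} {a : Option σ}
    {o : Obs M.normalForm.Δ M.normalForm.Γ} {q : M.normalForm.Q} {v : List M.normalForm.Γ}
    (ht : ((p, a, o), (q, v)) ∈ M.normalForm.trans) (hq : q ∉ M.normalForm.accept) :
    (o = Obs.bottom → v.length = 1) ∧ (∀ d g, o = Obs.pair d g → (v = [] ∨ ∃ x, v = [x, g])) ∧
      (o = Obs.blind → v.length = 1) := by
  have ht := M.mem_normalForm_trans.mp ht
  refine ⟨?_, ?_, ?_⟩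
  · rintro rfl
    exact ht.of_bottom.2 hq
  · rintro d g rfl
    exact ht.of_pair.2.imp_right fun h => h.2
  · rintro rfl
    exact (NFTrans.not_blind ht).elim

end CSPD

theorem cspd_normal_form_general (σ : Type) (M : CSPD σ) :
    ∃ M' : CSPD σ, M'.lang = M.lang ∧
      (∀ u ∈ M'.checkLang, ∀ (w : List σ) (c : M'.Q × List σ × List M'.Γ),
        M'.Reaches u w c → c.2.2.length ≤ u.length) ∧
      (∃ qacc : M'.Q, M'.accept = {qacc}) ∧
      (∀ u ∈ M'.checkLang, ∀ (w : List σ) (c : M'.Q × List σ × List M'.Γ),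
        M'.Reaches u w c → c.1 ∈ M'.accept → c.2.2 = []) ∧
      (∀ (p : M'.Q) (a : Option σ) (o : Obs M'.Δ M'.Γ) (q : M'.Q) (v : List M'.Γ),
        ((p, a, o), (q, v)) ∈ M'.trans → q ∈ M'.accept →
          (o = Obs.bottom → v = []) ∧
          (∀ d g, o = Obs.pair d g → v = [g]) ∧
          (o = Obs.blind → v = [])) ∧
      (∀ (p : M'.Q) (a : Option σ) (o : Obs M'.Δ M'.Γ) (q : M'.Q) (v : List M'.Γ),
        ((p, a, o), (q, v)) ∈ M'.trans → q ∉ M'.accept →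
          (o = Obs.bottom → v.length = 1) ∧
          (∀ d g, o = Obs.pair d g → (v = [] ∨ ∃ x, v = [x, g])) ∧
          (o = Obs.blind → v.length = 1)) :=
  ⟨M.normalForm, CSPD.normalForm_lang, fun _ hu _ _ h => CSPD.normalForm_height_le hu h,
    ⟨.accept, rfl⟩, fun _ _ _ _ h hc => CSPD.normalForm_pushdown_eq_nil h hc,
    fun _ _ _ _ _ ht hq => CSPD.normalForm_trans_to_accept ht hq,
    fun _ _ _ _ _ ht hq => CSPD.normalForm_trans_to_nonaccept ht hq⟩

/-- Normal form for cspd automata: every cspd automaton is equivalent to one in which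
(1) the pushdown is never higher than the check-stack, (2) there is a single accepting
state, (3) the pushdown is empty upon entering the accepting state, (4) transitions to
the accepting state do not modify the pushdown, and (5) every other transition pushes
exactly one letter or pops exactly one letter. -/
theorem cspd_normal_form (σ : Type) [Fintype σ] (M : CSPD σ) :
    ∃ M' : CSPD σ, M'.lang = M.lang ∧
      (∀ u ∈ M'.checkLang, ∀ (w : List σ) (c : M'.Q × List σ × List M'.Γ),
        M'.Reaches u w c → c.2.2.length ≤ u.length) ∧
      (∃ qacc : M'.Q, M'.accept = {qacc}) ∧
      (∀ u ∈ M'.checkLang, ∀ (w : List σ) (c : M'.Q × List σ × List M'.Γ),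
        M'.Reaches u w c → c.1 ∈ M'.accept → c.2.2 = []) ∧
      (∀ (p : M'.Q) (a : Option σ) (o : Obs M'.Δ M'.Γ) (q : M'.Q) (v : List M'.Γ),
        ((p, a, o), (q, v)) ∈ M'.trans → q ∈ M'.accept →
          (o = Obs.bottom → v = []) ∧
          (∀ d g, o = Obs.pair d g → v = [g]) ∧
          (o = Obs.blind → v = [])) ∧
      (∀ (p : M'.Q) (a : Option σ) (o : Obs M'.Δ M'.Γ) (q : M'.Q) (v : List M'.Γ),
        ((p, a, o), (q, v)) ∈ M'.trans → q ∉ M'.accept →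
          (o = Obs.bottom → v.length = 1) ∧
          (∀ d g, o = Obs.pair d g → (v = [] ∨ ∃ x, v = [x, g])) ∧
          (o = Obs.blind → v.length = 1)) :=
  cspd_normal_form_general σ M
end
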